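/- arXiv:1103.4569 — 2 statements merged into one kernel-verified Lean document; each statement's English description precedes it below -/
import Mathlib

section
/- For every integer n ≥ 1 and every s > 0, one has ∫_0^s I_n(t)² dt ≤ I_n(s)². -/
/-!
Differentiating under the integral sign gives `I_n' = (I_{n-1} + I_{n+1}) / 2`, so
`(I_n²)' = I_n (I_{n-1} + I_{n+1})`, and it suffices to show `I_n² ≤ I_n (I_{n-1} + I_{n+1})` on
`[0, s]`. Expanding `exp (t cos α)` and using `∫_0^π cos^m α cos (n α) dα = π C(m, k) / 2^m`
when `m = n + 2k` (and `0` when `m - n` is not an even natural number) gives the power series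
`I_n(t) = ∑_k (t/2)^(n+2k) / (k! (n+k)!)` for `n ≥ 0`. Hence `I_n(t) ≥ 0` for `t ≥ 0`, and
`I_{n+1}(t) ≤ I_n(t)` because each term of `I_{n+1}` is at most the mean of two consecutive terms
of `I_n` (AM-GM).
-/

open MeasureTheory Real intervalIntegral

/-- Modified Bessel function of the first kind of integer order `n`:
`I_n(t) = (1/π) ∫_0^π exp(t cos α) cos(n α) dα`. -/
noncomputable def besselI (n : ℤ) (t : ℝ) : ℝ :=
  (1 / Real.pi) * ∫ α in (0:ℝ)..Real.pi, Real.exp (t * Real.cos α) * Real.cos ((n : ℝ) * α)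

/-- Modified Bessel function of the second kind of integer order `n`:
`K_n(t) = ∫_0^∞ exp(−t cosh α) cosh(n α) dα`. -/
noncomputable def besselK (n : ℤ) (t : ℝ) : ℝ :=
  ∫ α in Set.Ioi (0:ℝ), Real.exp (-t * Real.cosh α) * Real.cosh ((n : ℝ) * α)

open scoped Nat

lemma cos_mul_cos_eq (α x : ℝ) : cos α * cos x = (cos (x - α) + cos (x + α)) / 2 := by
  rw [cos_sub, cos_add]
  ring

noncomputable def cosPowCosIntegral (m n : ℕ) : ℝ :=
  ∫ α in (0:ℝ)..π, cos α ^ m * cos (n * α)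

lemma cosPowCosIntegral_zero_zero : cosPowCosIntegral 0 0 = π := by
  simp [cosPowCosIntegral]

lemma cosPowCosIntegral_zero_of_ne_zero {n : ℕ} (hn : n ≠ 0) : cosPowCosIntegral 0 n = 0 := by
  have hn' : (n : ℝ) ≠ 0 := Nat.cast_ne_zero.2 hn
  simp [cosPowCosIntegral, integral_comp_mul_left (fun x => cos x) hn', sin_nat_mul_pi]

lemma cosPowCosIntegral_succ_zero (m : ℕ) :
    cosPowCosIntegral (m + 1) 0 = cosPowCosIntegral m 1 := by
  simp [cosPowCosIntegral, pow_succ]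

lemma cosPowCosIntegral_succ_succ (m n : ℕ) :
    cosPowCosIntegral (m + 1) (n + 1) =
      (cosPowCosIntegral m n + cosPowCosIntegral m (n + 2)) / 2 := by
  unfold cosPowCosIntegral
  rw [← intervalIntegral.integral_add ((by fun_prop : Continuous _).intervalIntegrable _ _)
    ((by fun_prop : Continuous _).intervalIntegrable _ _), ← intervalIntegral.integral_div]
  congr 1 with α
  rw [pow_succ, mul_assoc, cos_mul_cos_eq]
  push_cast
  ring_nf

lemma cosPowCosIntegral_eq_zero {m n : ℕ} (h : ∀ k, m ≠ n + 2 * k) :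
    cosPowCosIntegral m n = 0 := by
  induction m generalizing n with
  | zero => exact cosPowCosIntegral_zero_of_ne_zero fun hn => h 0 (by omega)
  | succ m ih =>
    rcases n with _ | n
    · rw [cosPowCosIntegral_succ_zero]
      exact ih fun k hk => h (k + 1) (by omega)
    · rw [cosPowCosIntegral_succ_succ, ih fun k hk => h k (by omega),
        ih fun k hk => h (k + 1) (by omega)]
      norm_num

lemma cosPowCosIntegral_of_eq_add_two_mul {m n k : ℕ} (h : m = n + 2 * k) :
    cosPowCosIntegral m n = π * m.choose k / 2 ^ m := by
  induction m generalizing n k with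
  | zero =>
    obtain ⟨rfl, rfl⟩ : n = 0 ∧ k = 0 := by omega
    simp [cosPowCosIntegral_zero_zero]
  | succ m ih =>
    rcases n with _ | n
    · obtain ⟨j, rfl⟩ : ∃ j, k = j + 1 := ⟨k - 1, by omega⟩
      have hsymm : m.choose (j + 1) = m.choose j := by
        rw [← Nat.choose_symm (by omega : j ≤ m)]
        congr 1
        omega
      rw [cosPowCosIntegral_succ_zero, ih (by omega : m = 1 + 2 * j), Nat.choose_succ_succ, hsymm,
        pow_succ]
      push_cast
      ring
    · rw [cosPowCosIntegral_succ_succ]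
      rcases k with _ | j
      · rw [ih (k := 0) (by omega), cosPowCosIntegral_eq_zero (by omega)]
        simp [pow_succ]
        ring
      · rw [ih (k := j + 1) (by omega), ih (k := j) (by omega), Nat.choose_succ_succ, pow_succ]
        push_cast
        ring


lemma hasSum_besselI_cosPowCosIntegral (n : ℕ) (t : ℝ) :
    HasSum (fun m : ℕ => t ^ m / m ! * cosPowCosIntegral m n / π) (besselI n t) := by
  have hexp (α : ℝ) : HasSum (fun m : ℕ => (t * cos α) ^ m / m ! * cos (n * α))
      (exp (t * cos α) * cos (n * α)) := by
    rw [exp_eq_exp_ℝ]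
    exact (NormedSpace.expSeries_div_hasSum_exp (t * cos α)).mul_right (cos (n * α))
  have hbound (m : ℕ) (α : ℝ) :
      ‖(t * cos α) ^ m / m ! * cos (n * α)‖ ≤ |t| ^ m / m ! := by
    simp only [norm_mul, norm_div, norm_pow, Real.norm_eq_abs, Nat.abs_cast]
    calc (|t| * |cos α|) ^ m / m ! * |cos (n * α)| ≤ (|t| * 1) ^ m / m ! * 1 := by
          gcongr
          exacts [abs_cos_le_one _, abs_cos_le_one _]
      _ = |t| ^ m / m ! := by ring
  have hint := intervalIntegral.hasSum_integral_of_dominated_convergence (μ := volume) (a := 0)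
    (b := π) (fun m _ => |t| ^ m / m !)
    (fun m => (by fun_prop : Continuous _).aestronglyMeasurable)
    (fun m => ae_of_all _ fun α _ => hbound m α)
    (ae_of_all _ fun _ _ => Real.summable_pow_div_factorial |t|) intervalIntegrable_const
    (ae_of_all _ fun α _ => hexp α)
  have hI : besselI n t = (∫ α in (0:ℝ)..π, exp (t * cos α) * cos (n * α)) / π := by
    unfold besselI
    push_cast
    ring
  rw [hI]
  refine (hint.div_const π).congr_fun fun m => ?_
  simp only [cosPowCosIntegral, ← intervalIntegral.integral_const_mul]
  congr 2 with α
  ring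

noncomputable def besselISeriesTerm (n k : ℕ) (x : ℝ) : ℝ :=
  x ^ (n + 2 * k) / (k ! * (n + k)!)

lemma hasSum_besselI_natCast (n : ℕ) (t : ℝ) :
    HasSum (fun k => besselISeriesTerm n k (t / 2)) (besselI n t) := by
  have hinj : Function.Injective fun k : ℕ => n + 2 * k := fun a b h => by simp_all
  have hsum := (hinj.hasSum_iff fun m hm => by
    rw [cosPowCosIntegral_eq_zero fun k hk => hm ⟨k, hk.symm⟩, mul_zero, zero_div]).2
    (hasSum_besselI_cosPowCosIntegral n t)
  refine hsum.congr_fun fun k => ?_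
  have hchoose := Nat.cast_choose ℝ (by omega : k ≤ n + 2 * k)
  rw [show n + 2 * k - k = n + k by omega] at hchoose
  simp only [Function.comp_apply, cosPowCosIntegral_of_eq_add_two_mul rfl, hchoose,
    besselISeriesTerm, div_pow]
  field_simp

lemma besselI_natCast_nonneg (n : ℕ) {t : ℝ} (ht : 0 ≤ t) : 0 ≤ besselI n t :=
  (hasSum_besselI_natCast n t).nonneg fun k => by unfold besselISeriesTerm; positivity

lemma besselISeriesTerm_succ_le (n k : ℕ) {x : ℝ} (hx : 0 ≤ x) :
    besselISeriesTerm (n + 1) k x ≤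
      (besselISeriesTerm n k x + besselISeriesTerm n (k + 1) x) / 2 := by
  set a := besselISeriesTerm n k x
  have ha : 0 ≤ a := by simp only [a, besselISeriesTerm]; positivity
  have hsucc : besselISeriesTerm (n + 1) k x = a * (x / (n + k + 1)) := by
    simp only [a, besselISeriesTerm, show n + 1 + 2 * k = n + 2 * k + 1 by omega,
      show n + 1 + k = n + k + 1 by omega, pow_succ, Nat.factorial_succ]
    push_cast
    field_simp
  have hnext : besselISeriesTerm n (k + 1) x = a * (x ^ 2 / ((k + 1) * (n + k + 1))) := by
    simp only [a, besselISeriesTerm, show n + 2 * (k + 1) = n + 2 * k + 2 by omega,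
      show n + (k + 1) = n + k + 1 by omega, pow_add, Nat.factorial_succ]
    push_cast
    field_simp
  have hamgm : x / (n + k + 1) ≤ (1 + x ^ 2 / ((k + 1) * (n + k + 1))) / 2 := by
    have hdiff : (1 + x ^ 2 / ((k + 1) * (n + k + 1))) / 2 - x / (n + k + 1)
        = ((x - (k + 1)) ^ 2 + (k + 1) * n) / (2 * (k + 1) * (n + k + 1)) := by
      field_simp
      ring
    rw [← sub_nonneg, hdiff]
    positivity
  rw [hsucc, hnext]
  linarith [mul_le_mul_of_nonneg_left hamgm ha]

lemma besselI_natCast_succ_le (n : ℕ) {t : ℝ} (ht : 0 ≤ t) :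
    besselI (n + 1 : ℕ) t ≤ besselI n t := by
  have hsum := hasSum_besselI_natCast n t
  have hle := hasSum_le (fun k => besselISeriesTerm_succ_le n k (by positivity : 0 ≤ t / 2))
    (hasSum_besselI_natCast (n + 1) t) ((hsum.add ((hasSum_nat_add_iff' 1).2 hsum)).div_const 2)
  have h0 : 0 ≤ besselISeriesTerm n 0 (t / 2) := by unfold besselISeriesTerm; positivity
  simp only [Finset.range_one, Finset.sum_singleton] at hle
  linarith

lemma hasDerivAt_integral_exp_mul_cos_mul {g : ℝ → ℝ} (hg : Continuous g) (a b x : ℝ) :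
    HasDerivAt (fun y => ∫ α in a..b, exp (y * cos α) * g α)
      (∫ α in a..b, cos α * exp (x * cos α) * g α) x := by
  refine (hasDerivAt_integral_of_dominated_loc_of_deriv_le
    (F := fun y α => exp (y * cos α) * g α) (F' := fun y α => cos α * exp (y * cos α) * g α)
    (bound := fun α => exp (|x| + 1) * |g α|) (Metric.ball_mem_nhds x one_pos)
    (.of_forall fun y => (by fun_prop : Continuous _).aestronglyMeasurable)
    ((by fun_prop : Continuous _).intervalIntegrable _ _)
    (by fun_prop : Continuous _).aestronglyMeasurable (ae_of_all _ fun α _ y hy => ?_)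
    ((by fun_prop : Continuous _).intervalIntegrable _ _) (ae_of_all _ fun α _ y _ => ?_)).2
  · have hy : |y| ≤ |x| + 1 := by
      have := abs_sub_abs_le_abs_sub y x
      rw [Metric.mem_ball, Real.dist_eq] at hy
      linarith
    have hexp : exp (y * cos α) ≤ exp (|x| + 1) := by
      refine exp_le_exp.2 ((le_abs_self _).trans ?_)
      rw [abs_mul]
      nlinarith [abs_cos_le_one α, abs_nonneg y, abs_nonneg (cos α)]
    rw [norm_mul, norm_mul, Real.norm_eq_abs, Real.norm_eq_abs, Real.norm_eq_abs, abs_exp]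
    calc |cos α| * exp (y * cos α) * |g α| ≤ 1 * exp (|x| + 1) * |g α| := by
          gcongr
          exact abs_cos_le_one α
      _ = exp (|x| + 1) * |g α| := by rw [one_mul]
  · exact ((hasDerivAt_mul_const (cos α)).exp.mul_const (g α)).congr_deriv (by ring)

lemma hasDerivAt_besselI (n : ℤ) (t : ℝ) :
    HasDerivAt (besselI n) ((besselI (n - 1) t + besselI (n + 1) t) / 2) t := by
  have h := (hasDerivAt_integral_exp_mul_cos_mul (g := fun α => cos (n * α)) (by fun_prop)
    0 π t).const_mul (1 / π)
  have hintegrand (α : ℝ) : cos α * exp (t * cos α) * cos (n * α)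
      = (exp (t * cos α) * cos ((n - 1 : ℤ) * α)
        + exp (t * cos α) * cos ((n + 1 : ℤ) * α)) / 2 := by
    rw [mul_right_comm, cos_mul_cos_eq]
    push_cast
    ring_nf
  simp only [hintegrand, intervalIntegral.integral_div] at h
  rw [intervalIntegral.integral_add ((by fun_prop : Continuous _).intervalIntegrable _ _)
    ((by fun_prop : Continuous _).intervalIntegrable _ _)] at h
  refine h.congr_deriv ?_
  unfold besselI
  ring

@[fun_prop]
lemma continuous_besselI (n : ℤ) : Continuous (besselI n) :=
  continuous_iff_continuousAt.2 fun t => (hasDerivAt_besselI n t).continuousAt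

lemma besselI_sq_le_mul_add {n : ℤ} (hn : 1 ≤ n) {t : ℝ} (ht : 0 ≤ t) :
    besselI n t ^ 2 ≤ besselI n t * (besselI (n - 1) t + besselI (n + 1) t) := by
  obtain ⟨m, rfl⟩ : ∃ m : ℕ, n = (m + 1 : ℕ) := ⟨(n - 1).toNat, by omega⟩
  have h0 := besselI_natCast_nonneg (m + 1) ht
  have h1 := besselI_natCast_nonneg (m + 2) ht
  have h2 := besselI_natCast_succ_le m ht
  push_cast at h0 h1 h2 ⊢
  rw [add_sub_cancel_right, add_assoc, one_add_one_eq_two]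
  nlinarith

/-- `∫_0^s I_n(t)² dt ≤ I_n(s)²` for `n ≥ 1` and `s > 0`. -/
theorem integral_besselI_sq_le_sq (n : ℤ) (hn : 1 ≤ n) (s : ℝ) (hs : 0 < s) :
    (∫ t in (0:ℝ)..s, (besselI n t) ^ 2) ≤ (besselI n s) ^ 2 := by
  have hderiv (t : ℝ) : HasDerivAt (fun t => besselI n t ^ 2)
      (besselI n t * (besselI (n - 1) t + besselI (n + 1) t)) t :=
    ((hasDerivAt_besselI n t).pow 2).congr_deriv (by ring)
  have hcont : Continuous fun t => besselI n t * (besselI (n - 1) t + besselI (n + 1) t) := by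
    fun_prop
  calc (∫ t in (0:ℝ)..s, besselI n t ^ 2)
      ≤ ∫ t in (0:ℝ)..s, besselI n t * (besselI (n - 1) t + besselI (n + 1) t) :=
        integral_mono_on hs.le ((by fun_prop : Continuous _).intervalIntegrable _ _)
          (hcont.intervalIntegrable _ _) fun t ht => besselI_sq_le_mul_add hn ht.1
    _ = besselI n s ^ 2 - besselI n 0 ^ 2 :=
        integral_eq_sub_of_hasDerivAt (fun t _ => hderiv t) (hcont.intervalIntegrable _ _)
    _ ≤ besselI n s ^ 2 := sub_le_self _ (sq_nonneg _)
end

section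
/- The function t ↦ I_0(t)·∫_t^∞ s·K_1(s) ds is bounded on (0, ∞), and its limit as t → ∞ equals 1/2. -/
/-!
Fubini and `∫_t^∞ s e^{-cs} ds = (t/c + 1/c²) e^{-ct}` give
`∫_t^∞ s K_1(s) ds = t K_0(t) + ∫_0^∞ e^{-t cosh β} / cosh β dβ`.

Both `e^{-t} I_0(t)` and `e^t K_0(t)` are integrals of `e^{-t φ}` with `φ x ~ x²/2` at the
endpoint `0` (`φ = 1 - cos` on `(0, π]`, resp. `φ = cosh - 1` on `(0, ∞)`). After the substitution
`x = u / √t`, a Gaussian lower bound `φ x ≥ c x²` both bounds `√t ∫ e^{-t φ}` uniformly in `t` and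
dominates, so dominated convergence gives Laplace's asymptotics `√t e^{-t} I_0(t) → 1/√(2π)` and
`√t e^t K_0(t) → √(π/2)`. Hence `t I_0 K_0` is bounded and tends to `1/2`. The remaining term is at
most `e^t · 2e^{-t} = 2`, and at most `I_0 K_0 = O(1/t)`.
-/

open MeasureTheory Real intervalIntegral

open Set Filter Topology

variable {t : ℝ}

lemma tendsto_div_sq_of_abs_sub_le {f : ℝ → ℝ} {a C : ℝ}
    (h : ∀ᶠ x in 𝓝 0, |f x - a * x ^ 2| ≤ C * x ^ 4) :
    Tendsto (fun x => f x / x ^ 2) (𝓝[≠] 0) (𝓝 a) := by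
  rw [tendsto_iff_norm_sub_tendsto_zero]
  have hC : Tendsto (fun x : ℝ => C * x ^ 2) (𝓝[≠] 0) (𝓝 0) := by
    have hcont : Continuous fun x : ℝ => C * x ^ 2 := by fun_prop
    simpa using (hcont.tendsto 0).mono_left nhdsWithin_le_nhds
  refine squeeze_zero' (.of_forall fun _ => norm_nonneg _) ?_ hC
  filter_upwards [nhdsWithin_le_nhds h, self_mem_nhdsWithin] with x hx (hx0 : x ≠ 0)
  have hx2 : 0 < x ^ 2 := by positivity
  rw [Real.norm_eq_abs, show f x / x ^ 2 - a = (f x - a * x ^ 2) / x ^ 2 by field_simp,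
    abs_div, abs_of_pos hx2, div_le_iff₀ hx2]
  linarith [show C * x ^ 4 = C * x ^ 2 * x ^ 2 by ring]

lemma tendsto_one_sub_cos_div_sq :
    Tendsto (fun x => (1 - cos x) / x ^ 2) (𝓝[≠] 0) (𝓝 (1 / 2)) := by
  refine tendsto_div_sq_of_abs_sub_le (C := 5 / 96) ?_
  filter_upwards [Metric.closedBall_mem_nhds (0 : ℝ) one_pos] with x hx
  have := Real.cos_bound (x := x) (by simpa using hx)
  rw [(by decide : Even 4).pow_abs] at this
  rw [show 1 - cos x - 1 / 2 * x ^ 2 = -(cos x - (1 - x ^ 2 / 2)) by ring, abs_neg]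
  linarith

lemma one_add_sq_div_two_le_cosh (x : ℝ) : 1 + x ^ 2 / 2 ≤ cosh x := by
  have := sum_le_hasSum (Finset.range 2)
    (fun n _ => div_nonneg ((even_two_mul n).pow_nonneg x) (Nat.cast_nonneg _))
    (Real.hasSum_cosh x)
  simpa [Finset.sum_range_succ] using this

lemma tendsto_cosh_sub_one_div_sq :
    Tendsto (fun x => (cosh x - 1) / x ^ 2) (𝓝[≠] 0) (𝓝 (1 / 2)) := by
  refine tendsto_div_sq_of_abs_sub_le (C := 1 / 4) ?_
  filter_upwards [Metric.closedBall_mem_nhds (0 : ℝ) one_pos] with x hx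
  have hx : x ^ 2 / 2 ≤ 1 := by
    have : |x| ≤ 1 := by simpa using hx
    nlinarith [sq_abs x, abs_nonneg x]
  have hexp := Real.abs_exp_sub_one_sub_id_le (x := x ^ 2 / 2)
    (by rwa [abs_of_nonneg (by positivity)])
  have hlow := one_add_sq_div_two_le_cosh x
  have hup := Real.cosh_le_exp_half_sq x
  rw [abs_of_nonneg (by linarith)]
  nlinarith [le_abs_self (exp (x ^ 2 / 2) - 1 - x ^ 2 / 2)]

lemma sqrt_mul_integral_Ioi_eq (ht : 0 < t) (f : ℝ → ℝ) :
    √t * ∫ x in Ioi 0, f x = ∫ u in Ioi 0, f (u / √t) := by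
  have hb : 0 < (√t)⁻¹ := by positivity
  simp_rw [div_eq_inv_mul, integral_comp_mul_left_Ioi f 0 hb, mul_zero, inv_inv, smul_eq_mul]

section Laplace

variable {φ : ℝ → ℝ} {s : Set ℝ} {c : ℝ}

lemma indicator_exp_neg_mul_comp_div_sqrt_le (hφ : ∀ x ∈ s, c * x ^ 2 ≤ φ x) (ht : 0 < t)
    (u : ℝ) : s.indicator (fun x => exp (-(t * φ x))) (u / √t) ≤ exp (-c * u ^ 2) := by
  by_cases hu : u / √t ∈ s
  · rw [indicator_of_mem hu, exp_le_exp]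
    have h := mul_le_mul_of_nonneg_left (hφ _ hu) ht.le
    rw [div_pow, sq_sqrt ht.le] at h
    field_simp at h ⊢
    linarith
  · rw [indicator_of_notMem hu]
    positivity

lemma sqrt_mul_setIntegral_exp_neg_mul_eq (hs : MeasurableSet s) (hs0 : s ⊆ Ioi 0)
    (ht : 0 < t) :
    √t * ∫ x in s, exp (-(t * φ x)) =
      ∫ u in Ioi 0, s.indicator (fun x => exp (-(t * φ x))) (u / √t) := by
  rw [← sqrt_mul_integral_Ioi_eq ht, setIntegral_indicator hs, inter_eq_right.2 hs0]

lemma sqrt_mul_setIntegral_exp_neg_mul_le (hs : MeasurableSet s) (hs0 : s ⊆ Ioi 0)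
    (hφ : ∀ x ∈ s, c * x ^ 2 ≤ φ x) (hc : 0 < c) (ht : 0 < t) :
    √t * ∫ x in s, exp (-(t * φ x)) ≤ √(π / c) / 2 := by
  rw [sqrt_mul_setIntegral_exp_neg_mul_eq hs hs0 ht, ← integral_gaussian_Ioi]
  refine integral_mono_of_nonneg (.of_forall fun u => indicator_nonneg (fun _ _ => ?_) _)
    (integrable_exp_neg_mul_sq hc).integrableOn
    (.of_forall (indicator_exp_neg_mul_comp_div_sqrt_le hφ ht))
  positivity

/-- Laplace's method at the endpoint `0` of `s`, where `φ x ~ a x²`. -/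
lemma tendsto_sqrt_mul_setIntegral_exp_neg_mul {a : ℝ} (hs : MeasurableSet s)
    (hs0 : s ⊆ Ioi 0) (hs_nhds : s ∈ 𝓝[>] 0) (hφm : Measurable φ)
    (hφ : ∀ x ∈ s, c * x ^ 2 ≤ φ x) (hc : 0 < c)
    (hlim : Tendsto (fun x => φ x / x ^ 2) (𝓝[>] 0) (𝓝 a)) :
    Tendsto (fun t => √t * ∫ x in s, exp (-(t * φ x))) atTop (𝓝 (√(π / a) / 2)) := by
  rw [← integral_gaussian_Ioi]
  refine Tendsto.congr' (eventually_gt_atTop 0 |>.mono fun t ht =>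
    (sqrt_mul_setIntegral_exp_neg_mul_eq hs hs0 ht).symm) ?_
  refine tendsto_integral_filter_of_dominated_convergence (fun u => exp (-c * u ^ 2))
    (.of_forall fun t => ?_) (eventually_gt_atTop 0 |>.mono fun t ht => ?_)
    (integrable_exp_neg_mul_sq hc).integrableOn ?_
  · exact (((hφm.const_mul t).neg.exp.indicator hs).comp
      (measurable_id.div_const _)).aestronglyMeasurable
  · refine .of_forall fun u => ?_
    rw [Real.norm_of_nonneg (indicator_nonneg (fun _ _ => (exp_pos _).le) _)]
    exact indicator_exp_neg_mul_comp_div_sqrt_le hφ ht u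
  · rw [ae_restrict_iff' measurableSet_Ioi]
    refine .of_forall fun u (hu : 0 < u) => ?_
    have hx : Tendsto (fun t => u / √t) atTop (𝓝[>] 0) :=
      tendsto_nhdsWithin_iff.2 ⟨tendsto_const_nhds.div_atTop tendsto_sqrt_atTop,
        eventually_gt_atTop 0 |>.mono fun t ht => div_pos hu (sqrt_pos.2 ht)⟩
    have hexp := ((hlim.comp hx).const_mul (u ^ 2)).neg.rexp
    refine hexp.congr' ?_ |>.trans (by rw [neg_mul, mul_comm])
    filter_upwards [hx hs_nhds, eventually_gt_atTop 0] with t hts ht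
    rw [indicator_of_mem (s := s) hts, Function.comp_apply, div_pow, sq_sqrt ht.le]
    field_simp

lemma besselI_zero_eq_exp_mul_integral (t : ℝ) :
    besselI 0 t = exp t / π * ∫ α in Ioc 0 π, exp (-(t * (1 - cos α))) := by
  have h : ∀ α, exp (t * cos α) * cos (((0 : ℤ) : ℝ) * α) =
      exp t * exp (-(t * (1 - cos α))) :=
    fun α => by rw [← exp_add]; norm_num; ring_nf
  rw [besselI, intervalIntegral.integral_of_le pi_pos.le]
  simp_rw [h, MeasureTheory.integral_const_mul]
  ring

lemma besselK_zero_eq_integral (t : ℝ) : besselK 0 t = ∫ β in Ioi 0, exp (-(t * cosh β)) := by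
  simp [besselK]

lemma besselK_one_eq_integral (t : ℝ) :
    besselK 1 t = ∫ β in Ioi 0, exp (-(t * cosh β)) * cosh β := by
  simp [besselK]

lemma besselK_zero_eq_exp_neg_mul_integral (t : ℝ) :
    besselK 0 t = exp (-t) * ∫ β in Ioi 0, exp (-(t * (cosh β - 1))) := by
  rw [besselK_zero_eq_integral, ← MeasureTheory.integral_const_mul]
  congr 1 with β
  rw [← exp_add]
  ring_nf

lemma besselK_zero_nonneg (t : ℝ) : 0 ≤ besselK 0 t := by
  rw [besselK_zero_eq_integral]
  exact setIntegral_nonneg measurableSet_Ioi fun β _ => (exp_pos _).le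

lemma besselI_zero_nonneg (t : ℝ) : 0 ≤ besselI 0 t := by
  rw [besselI_zero_eq_exp_mul_integral]
  exact mul_nonneg (div_nonneg (exp_pos t).le pi_pos.le)
    (setIntegral_nonneg measurableSet_Ioc fun α _ => (exp_pos _).le)

lemma besselI_zero_le_exp (ht : 0 ≤ t) : besselI 0 t ≤ exp t := by
  have h : ∫ α in Ioc 0 π, exp (-(t * (1 - cos α))) ≤ ∫ _ in Ioc 0 π, (1 : ℝ) :=
    integral_mono_of_nonneg (.of_forall fun _ => (exp_pos _).le) (integrableOn_const (by simp))
      (.of_forall fun α => exp_le_one_iff.2 (by nlinarith [cos_le_one α]))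
  rw [setIntegral_const, Real.volume_real_Ioc_of_le pi_pos.le, sub_zero, smul_eq_mul,
    mul_one] at h
  rw [besselI_zero_eq_exp_mul_integral, div_mul_eq_mul_div, div_le_iff₀ pi_pos]
  exact mul_le_mul_of_nonneg_left h (exp_pos t).le

lemma sqrt_mul_exp_neg_mul_besselI_zero_eq :
    √t * (exp (-t) * besselI 0 t) =
      (√t * ∫ α in Ioc 0 π, exp (-(t * (1 - cos α)))) / π := by
  rw [besselI_zero_eq_exp_mul_integral, exp_neg]
  field_simp

lemma sqrt_mul_exp_mul_besselK_zero_eq :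
    √t * (exp t * besselK 0 t) = √t * ∫ β in Ioi 0, exp (-(t * (cosh β - 1))) := by
  rw [besselK_zero_eq_exp_neg_mul_integral, ← mul_assoc (exp t), ← exp_add, add_neg_cancel,
    exp_zero, one_mul]

lemma two_div_pi_sq_mul_sq_le_one_sub_cos {x : ℝ} (hx : x ∈ Ioc 0 π) :
    2 / π ^ 2 * x ^ 2 ≤ 1 - cos x := by
  have := cos_le_one_sub_mul_cos_sq (abs_le.2 ⟨by linarith [pi_pos, hx.1], hx.2⟩)
  linarith

lemma half_mul_sq_le_cosh_sub_one (x : ℝ) : 1 / 2 * x ^ 2 ≤ cosh x - 1 := by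
  linarith [one_add_sq_div_two_le_cosh x]

lemma sqrt_mul_exp_neg_mul_besselI_zero_le (ht : 0 < t) :
    √t * (exp (-t) * besselI 0 t) ≤ √(π / (2 / π ^ 2)) / 2 / π := by
  rw [sqrt_mul_exp_neg_mul_besselI_zero_eq]
  gcongr
  exact sqrt_mul_setIntegral_exp_neg_mul_le measurableSet_Ioc (fun x hx => hx.1)
    (fun x => two_div_pi_sq_mul_sq_le_one_sub_cos) (by positivity) ht

lemma sqrt_mul_exp_mul_besselK_zero_le (ht : 0 < t) :
    √t * (exp t * besselK 0 t) ≤ √(π / (1 / 2)) / 2 := by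
  rw [sqrt_mul_exp_mul_besselK_zero_eq]
  exact sqrt_mul_setIntegral_exp_neg_mul_le measurableSet_Ioi subset_rfl
    (fun x _ => half_mul_sq_le_cosh_sub_one x) (by norm_num) ht

lemma tendsto_sqrt_mul_exp_neg_mul_besselI_zero :
    Tendsto (fun t => √t * (exp (-t) * besselI 0 t)) atTop (𝓝 (√(2 * π))⁻¹) := by
  have hval : √(π / (1 / 2)) / 2 / π = (√(2 * π))⁻¹ := by
    have h := mul_self_sqrt (by positivity : (0 : ℝ) ≤ 2 * π)
    rw [show π / (1 / 2) = 2 * π by ring]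
    field_simp
    linarith
  simp_rw [sqrt_mul_exp_neg_mul_besselI_zero_eq, ← hval]
  exact (tendsto_sqrt_mul_setIntegral_exp_neg_mul measurableSet_Ioc (fun x hx => hx.1)
    (Ioc_mem_nhdsGT pi_pos) (by fun_prop) (fun x => two_div_pi_sq_mul_sq_le_one_sub_cos)
    (by positivity) (tendsto_one_sub_cos_div_sq.mono_left (nhdsGT_le_nhdsNE 0))).div_const π

lemma tendsto_sqrt_mul_exp_mul_besselK_zero :
    Tendsto (fun t => √t * (exp t * besselK 0 t)) atTop (𝓝 √(π / 2)) := by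
  have hval : √(π / (1 / 2)) / 2 = √(π / 2) := by
    rw [show π / (1 / 2) = 2 ^ 2 * (π / 2) by ring, sqrt_mul (by positivity), sqrt_sq two_pos.le]
    ring
  simp_rw [sqrt_mul_exp_mul_besselK_zero_eq, ← hval]
  exact tendsto_sqrt_mul_setIntegral_exp_neg_mul measurableSet_Ioi subset_rfl
    self_mem_nhdsWithin (by fun_prop) (fun x _ => half_mul_sq_le_cosh_sub_one x) (by norm_num)
    (tendsto_cosh_sub_one_div_sq.mono_left (nhdsGT_le_nhdsNE 0))

lemma mul_besselI_zero_mul_besselK_zero_eq (ht : 0 ≤ t) :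
    t * (besselI 0 t * besselK 0 t) =
      (√t * (exp (-t) * besselI 0 t)) * (√t * (exp t * besselK 0 t)) := by
  have h : exp (-t) * exp t = 1 := by rw [← exp_add, neg_add_cancel, exp_zero]
  calc t * (besselI 0 t * besselK 0 t)
      = (√t * √t) * (exp (-t) * exp t) * (besselI 0 t * besselK 0 t) := by
        rw [mul_self_sqrt ht, h, mul_one]
    _ = _ := by ring

lemma tendsto_mul_besselI_zero_mul_besselK_zero :
    Tendsto (fun t => t * (besselI 0 t * besselK 0 t)) atTop (𝓝 (1 / 2)) := by
  have h := tendsto_sqrt_mul_exp_neg_mul_besselI_zero.mul tendsto_sqrt_mul_exp_mul_besselK_zero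
  have hval : (√(2 * π))⁻¹ * √(π / 2) = 1 / 2 := by
    rw [← sqrt_inv, ← sqrt_mul (by positivity),
      show (2 * π)⁻¹ * (π / 2) = (1 / 2) ^ 2 by field_simp, sqrt_sq (by norm_num)]
  rw [hval] at h
  exact h.congr' (eventually_ge_atTop 0 |>.mono fun t ht =>
    (mul_besselI_zero_mul_besselK_zero_eq ht).symm)

lemma exists_mul_besselI_zero_mul_besselK_zero_le :
    ∃ C, ∀ t, 0 < t → t * (besselI 0 t * besselK 0 t) ≤ C := by
  refine ⟨√(π / (2 / π ^ 2)) / 2 / π * (√(π / (1 / 2)) / 2), fun t ht => ?_⟩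
  rw [mul_besselI_zero_mul_besselK_zero_eq ht.le]
  exact mul_le_mul (sqrt_mul_exp_neg_mul_besselI_zero_le ht)
    (sqrt_mul_exp_mul_besselK_zero_le ht)
    (mul_nonneg (sqrt_nonneg t) (mul_nonneg (exp_pos t).le (besselK_zero_nonneg t)))
    (by positivity)

section ExpIntegral

variable {c : ℝ}

lemma hasDerivAt_neg_add_mul_exp_neg_mul (hc : c ≠ 0) (s : ℝ) :
    HasDerivAt (fun s => -((s / c + 1 / c ^ 2) * exp (-(c * s)))) (s * exp (-(c * s))) s := by
  refine ((((hasDerivAt_id s).div_const c).add_const (1 / c ^ 2)).mul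
    (((hasDerivAt_id s).const_mul c).neg.exp)).neg.congr_deriv ?_
  simp only [id, Pi.neg_apply]
  field_simp
  ring

lemma tendsto_neg_add_mul_exp_neg_mul (hc : 0 < c) :
    Tendsto (fun s => -((s / c + 1 / c ^ 2) * exp (-(c * s)))) atTop (𝓝 0) := by
  have h : Tendsto (fun x => x * exp (-x) + exp (-x)) atTop (𝓝 0) := by
    simpa using (tendsto_pow_mul_exp_neg_atTop_nhds_zero 1).add tendsto_exp_neg_atTop_nhds_zero
  have := ((h.comp (tendsto_id.const_mul_atTop hc)).const_mul (-(1 / c ^ 2)))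
  rw [mul_zero] at this
  refine this.congr fun s => ?_
  simp only [Function.comp_apply, id]
  field_simp

lemma integrableOn_Ioi_mul_exp_neg_mul (hc : 0 < c) (ht : 0 ≤ t) :
    IntegrableOn (fun s => s * exp (-(c * s))) (Ioi t) :=
  integrableOn_Ioi_deriv_of_nonneg' (fun s _ => hasDerivAt_neg_add_mul_exp_neg_mul hc.ne' s)
    (fun _ hs => mul_nonneg (ht.trans hs.out.le) (exp_pos _).le)
    (tendsto_neg_add_mul_exp_neg_mul hc)

lemma integral_Ioi_mul_exp_neg_mul (hc : 0 < c) (ht : 0 ≤ t) :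
    ∫ s in Ioi t, s * exp (-(c * s)) = (t / c + 1 / c ^ 2) * exp (-(c * t)) := by
  rw [integral_Ioi_of_hasDerivAt_of_nonneg'
    (fun s _ => hasDerivAt_neg_add_mul_exp_neg_mul hc.ne' s)
    (fun _ hs => mul_nonneg (ht.trans hs.out.le) (exp_pos _).le)
    (tendsto_neg_add_mul_exp_neg_mul hc), zero_sub, neg_neg]

end ExpIntegral

lemma exp_neg_mul_cosh_mul_cosh_le (ht : 0 < t) (β : ℝ) :
    exp (-(t * cosh β)) * cosh β ≤ 2 / t * exp (-(t / 4) * β ^ 2) := by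
  have hy : t * cosh β / 2 * exp (-(t * cosh β / 2)) ≤ 1 :=
    (mul_exp_neg_le_exp_neg_one _).trans (by simp)
  have hdecay : exp (-(t * cosh β / 2)) ≤ exp (-(t / 4) * β ^ 2) := by
    rw [exp_le_exp]
    nlinarith [one_add_sq_div_two_le_cosh β]
  calc exp (-(t * cosh β)) * cosh β
      = 2 / t * (t * cosh β / 2 * exp (-(t * cosh β / 2))) * exp (-(t * cosh β / 2)) := by
        rw [show -(t * cosh β) = -(t * cosh β / 2) + -(t * cosh β / 2) by ring, exp_add]
        field_simp
    _ ≤ 2 / t * 1 * exp (-(t / 4) * β ^ 2) := by gcongr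
    _ = 2 / t * exp (-(t / 4) * β ^ 2) := by rw [mul_one]

lemma integrable_exp_neg_mul_cosh_mul_cosh (ht : 0 < t) :
    Integrable fun β => exp (-(t * cosh β)) * cosh β :=
  ((integrable_exp_neg_mul_sq (b := t / 4) (by positivity)).const_mul (2 / t)).mono'
    (by fun_prop) (.of_forall fun β => by
      rw [Real.norm_of_nonneg (by positivity)]
      exact exp_neg_mul_cosh_mul_cosh_le ht β)

lemma integrable_exp_neg_mul_cosh (ht : 0 < t) : Integrable fun β => exp (-(t * cosh β)) :=
  (integrable_exp_neg_mul_cosh_mul_cosh ht).mono' (by fun_prop) (.of_forall fun β => by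
    rw [Real.norm_of_nonneg (exp_pos _).le]
    exact le_mul_of_one_le_right (exp_pos _).le (one_le_cosh β))

lemma integrable_exp_neg_mul_cosh_div_cosh (ht : 0 < t) :
    Integrable fun β => exp (-(t * cosh β)) / cosh β :=
  (integrable_exp_neg_mul_cosh ht).mono' (by fun_prop : Measurable _).aestronglyMeasurable
    (.of_forall fun β => by
      rw [Real.norm_of_nonneg (div_nonneg (exp_pos _).le (cosh_pos β).le)]
      exact div_le_self (exp_pos _).le (one_le_cosh β))

/-- By Fubini, this is `∫_t^∞ K_0(s) ds`. -/
noncomputable def besselKZeroTail (t : ℝ) : ℝ := ∫ β in Ioi 0, exp (-(t * cosh β)) / cosh β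

lemma integral_Ioi_mul_besselK_one (ht : 0 < t) :
    ∫ s in Ioi t, s * besselK 1 s = t * besselK 0 t + besselKZeroTail t := by
  set F : ℝ → ℝ → ℝ := fun β s => s * exp (-(s * cosh β)) * cosh β
  have hF_nonneg : ∀ β, ∀ s ∈ Ioi t, 0 ≤ F β s := fun β s hs =>
    mul_nonneg (mul_nonneg (ht.trans hs).le (exp_pos _).le) (cosh_pos β).le
  have hF_eq : ∀ β s, F β s = s * exp (-(cosh β * s)) * cosh β := fun β s => by
    simp only [F, mul_comm s (cosh β)]
  have hF_inner : ∀ β, ∫ s in Ioi t, F β s =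
      t * exp (-(t * cosh β)) + exp (-(t * cosh β)) / cosh β := fun β => by
    simp_rw [hF_eq, MeasureTheory.integral_mul_const,
      integral_Ioi_mul_exp_neg_mul (cosh_pos β) ht.le]
    field_simp
  have hF_int : Integrable (Function.uncurry F)
      ((volume.restrict (Ioi 0)).prod (volume.restrict (Ioi t))) := by
    rw [integrable_prod_iff (by fun_prop)]
    refine ⟨.of_forall fun β => ?_, ?_⟩
    · simp_rw [Function.uncurry_apply_pair, hF_eq]
      exact (integrableOn_Ioi_mul_exp_neg_mul (cosh_pos β) ht.le).mul_const _
    · have h : ∀ β, ∫ s in Ioi t, ‖Function.uncurry F (β, s)‖ = ∫ s in Ioi t, F β s :=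
        fun β => setIntegral_congr_fun measurableSet_Ioi fun s hs =>
          Real.norm_of_nonneg (hF_nonneg β s hs)
      simp_rw [h, hF_inner]
      exact (((integrable_exp_neg_mul_cosh ht).const_mul t).add
        (integrable_exp_neg_mul_cosh_div_cosh ht)).integrableOn
  calc ∫ s in Ioi t, s * besselK 1 s = ∫ s in Ioi t, ∫ β in Ioi 0, F β s := by
        refine setIntegral_congr_fun measurableSet_Ioi fun s _ => ?_
        simp_rw [besselK_one_eq_integral, F, mul_assoc, MeasureTheory.integral_const_mul]
    _ = ∫ β in Ioi 0, ∫ s in Ioi t, F β s := (integral_integral_swap hF_int).symm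
    _ = t * besselK 0 t + besselKZeroTail t := by
        simp_rw [hF_inner]
        rw [integral_add ((integrable_exp_neg_mul_cosh ht).const_mul t).integrableOn
          (integrable_exp_neg_mul_cosh_div_cosh ht).integrableOn, MeasureTheory.integral_const_mul,
          besselK_zero_eq_integral, besselKZeroTail]

lemma besselKZeroTail_nonneg (t : ℝ) : 0 ≤ besselKZeroTail t :=
  setIntegral_nonneg measurableSet_Ioi fun β _ => div_nonneg (exp_pos _).le (cosh_pos β).le

lemma besselKZeroTail_le_besselK_zero (ht : 0 < t) : besselKZeroTail t ≤ besselK 0 t := by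
  rw [besselKZeroTail, besselK_zero_eq_integral]
  exact setIntegral_mono (integrable_exp_neg_mul_cosh_div_cosh ht).integrableOn
    (integrable_exp_neg_mul_cosh ht).integrableOn
    fun β => div_le_self (exp_pos _).le (one_le_cosh β)

lemma exp_neg_mul_cosh_div_cosh_le (ht : 0 ≤ t) (β : ℝ) :
    exp (-(t * cosh β)) / cosh β ≤ 2 * exp (-t) * exp (-β) := by
  have hnum : exp (-(t * cosh β)) ≤ exp (-t) := exp_le_exp.2 (by nlinarith [one_le_cosh β])
  have hden : exp β / 2 ≤ cosh β := by rw [cosh_eq]; linarith [exp_pos (-β)]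
  calc exp (-(t * cosh β)) / cosh β ≤ exp (-t) / (exp β / 2) := by gcongr
    _ = 2 * exp (-t) * exp (-β) := by rw [exp_neg β]; field_simp

lemma besselKZeroTail_le (ht : 0 ≤ t) : besselKZeroTail t ≤ 2 * exp (-t) := by
  have hint : IntegrableOn (fun β => 2 * exp (-t) * exp (-β)) (Ioi 0) := by
    have h := (exp_neg_integrableOn_Ioi 0 one_pos).const_mul (2 * exp (-t))
    simp only [neg_mul, one_mul] at h
    exact h
  calc besselKZeroTail t ≤ ∫ β in Ioi 0, 2 * exp (-t) * exp (-β) :=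
        integral_mono_of_nonneg (.of_forall fun β => div_nonneg (exp_pos _).le (cosh_pos β).le)
          hint (.of_forall (exp_neg_mul_cosh_div_cosh_le ht))
    _ = 2 * exp (-t) := by
        rw [MeasureTheory.integral_const_mul, integral_exp_neg_Ioi_zero, mul_one]

lemma besselI_zero_mul_besselKZeroTail_le_two (ht : 0 ≤ t) :
    besselI 0 t * besselKZeroTail t ≤ 2 :=
  calc besselI 0 t * besselKZeroTail t ≤ exp t * (2 * exp (-t)) :=
        mul_le_mul (besselI_zero_le_exp ht) (besselKZeroTail_le ht) (besselKZeroTail_nonneg t)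
          (exp_pos t).le
    _ = 2 := by rw [mul_left_comm, ← exp_add, add_neg_cancel, exp_zero, mul_one]

lemma tendsto_besselI_zero_mul_besselKZeroTail :
    Tendsto (fun t => besselI 0 t * besselKZeroTail t) atTop (𝓝 0) := by
  have h := tendsto_mul_besselI_zero_mul_besselK_zero.mul tendsto_inv_atTop_zero
  rw [mul_zero] at h
  refine squeeze_zero' (.of_forall fun t =>
    mul_nonneg (besselI_zero_nonneg t) (besselKZeroTail_nonneg t)) ?_ h
  filter_upwards [eventually_gt_atTop 0] with t ht
  rw [mul_comm t, mul_assoc, mul_inv_cancel₀ ht.ne', mul_one]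
  exact mul_le_mul_of_nonneg_left (besselKZeroTail_le_besselK_zero ht) (besselI_zero_nonneg t)

open Filter in
/-- The function `t ↦ I_0(t)·∫_t^∞ s·K_1(s) ds` is bounded on `(0,∞)`, and tends to `1/2`
as `t → ∞`. -/
theorem besselI_mul_integral_besselK_bounded_and_tendsto :
    (∃ C : ℝ, ∀ t : ℝ, 0 < t →
      |besselI 0 t * ∫ s in Set.Ioi t, s * besselK 1 s| ≤ C) ∧
    Tendsto (fun t : ℝ => besselI 0 t * ∫ s in Set.Ioi t, s * besselK 1 s)
      atTop (nhds (1 / 2)) := by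
  have hsplit : ∀ t : ℝ, 0 < t → besselI 0 t * ∫ s in Set.Ioi t, s * besselK 1 s =
      t * (besselI 0 t * besselK 0 t) + besselI 0 t * besselKZeroTail t := fun t ht => by
    rw [integral_Ioi_mul_besselK_one ht]
    ring
  obtain ⟨C, hC⟩ := exists_mul_besselI_zero_mul_besselK_zero_le
  refine ⟨⟨C + 2, fun t ht => ?_⟩, ?_⟩
  · rw [hsplit t ht, abs_of_nonneg (by
      have := besselI_zero_nonneg t
      have := besselK_zero_nonneg t
      have := besselKZeroTail_nonneg t
      positivity)]
    exact add_le_add (hC t ht) (besselI_zero_mul_besselKZeroTail_le_two ht.le)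
  · have h := tendsto_mul_besselI_zero_mul_besselK_zero.add
      tendsto_besselI_zero_mul_besselKZeroTail
    rw [add_zero] at h
    exact h.congr' (eventually_gt_atTop 0 |>.mono fun t ht => (hsplit t ht).symm)
end Laplace
end
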